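/- Let T = {1,2,3,4} and let G be any edge-capacitated graph containing T. Then cut_G({1,2}) + cut_G({1,3}) + cut_G({1,4}) ≥ cut_G({1}) + cut_G({2}) + cut_G({3}) + cut_G({4}). -/

import Mathlib

open Finset
open scoped Classical

noncomputable def crossCap {V : Type*} [Fintype V] (c : V → V → ℝ) (A : Finset V) : ℝ :=
  ∑ u ∈ A, ∑ v ∈ Aᶜ, c u v

noncomputable def cutVal {V : Type*} [Fintype V] (c : V → V → ℝ) (T S : Finset V) : ℝ :=
  Finset.inf' (Finset.univ.filter fun A : Finset V => S ⊆ A ∧ Disjoint (T \ S) A)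
    ⟨S, by simp [Finset.sdiff_disjoint]⟩ (fun A => crossCap c A)

/-!
Take minimum cuts `A`, `B`, `C` for `{1,2}`, `{1,3}`, `{1,4}`. The four sets `A ∩ B ∩ C`,
`A \ (B ∪ C)`, `B \ (A ∪ C)`, `C \ (A ∪ B)` are then cuts for `{1}`, `{2}`, `{3}`, `{4}`, and
for a symmetric nonnegative capacity their total capacity is at most that of `A`, `B`, `C`:
writing `2 * crossCap c X = ∑ c u v * δ_X(u, v)` with the cut metric `δ_X`, this reduces to the
pointwise inequality between the cut metrics, a finite check on the membership of `u` and `v`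
in `A`, `B`, `C`.
-/

theorem Finset.inter_sdiff_distrib_left {α : Type*} [DecidableEq α] (s t u : Finset α) :
    s ∩ (t \ u) = (s ∩ t) \ (s ∩ u) :=
  inf_sdiff_distrib_left s t u

section

variable {V : Type*}

noncomputable def cutMetric (A : Finset V) (u v : V) : ℝ := if (u ∈ A ↔ v ∈ A) then 0 else 1

theorem cutMetric_uncross (A B C : Finset V) (u v : V) :
    cutMetric (A ∩ B ∩ C) u v + cutMetric (A \ (B ∪ C)) u v + cutMetric (B \ (A ∪ C)) u v +
        cutMetric (C \ (A ∪ B)) u v ≤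
      cutMetric A u v + cutMetric B u v + cutMetric C u v := by
  simp only [cutMetric, mem_inter, mem_sdiff, mem_union]
  by_cases u ∈ A <;> by_cases u ∈ B <;> by_cases u ∈ C <;>
    by_cases v ∈ A <;> by_cases v ∈ B <;> by_cases v ∈ C <;> simp [*]

variable [Fintype V]

theorem crossCap_eq_sum_ite (c : V → V → ℝ) (A : Finset V) :
    crossCap c A = ∑ u, ∑ v, if u ∈ A ∧ v ∉ A then c u v else 0 := by
  simp_rw [ite_and, sum_ite_irrel, sum_const_zero, ← sum_filter, filter_not, filter_mem_eq_inter,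
    univ_inter, ← compl_eq_univ_sdiff]
  rfl

theorem two_mul_crossCap {c : V → V → ℝ} (hsym : ∀ u v, c u v = c v u) (A : Finset V) :
    2 * crossCap c A = ∑ u, ∑ v, c u v * cutMetric A u v := by
  have hsplit : ∀ u v, c u v * cutMetric A u v =
      (if u ∈ A ∧ v ∉ A then c u v else 0) + (if v ∈ A ∧ u ∉ A then c v u else 0) := by
    intro u v
    rw [hsym v u]
    by_cases u ∈ A <;> by_cases v ∈ A <;> simp [cutMetric, *]
  simp only [hsplit, sum_add_distrib]
  rw [sum_comm (f := fun u v => if v ∈ A ∧ u ∉ A then c v u else 0), ← crossCap_eq_sum_ite]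
  ring

theorem crossCap_uncross {c : V → V → ℝ} (hc : ∀ u v, 0 ≤ c u v) (hsym : ∀ u v, c u v = c v u)
    (A B C : Finset V) :
    crossCap c (A ∩ B ∩ C) + crossCap c (A \ (B ∪ C)) + crossCap c (B \ (A ∪ C)) +
        crossCap c (C \ (A ∪ B)) ≤
      crossCap c A + crossCap c B + crossCap c C := by
  have h : ∑ u, ∑ v, c u v * (cutMetric (A ∩ B ∩ C) u v + cutMetric (A \ (B ∪ C)) u v +
      cutMetric (B \ (A ∪ C)) u v + cutMetric (C \ (A ∪ B)) u v) ≤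
      ∑ u, ∑ v, c u v * (cutMetric A u v + cutMetric B u v + cutMetric C u v) :=
    sum_le_sum fun u _ => sum_le_sum fun v _ =>
      mul_le_mul_of_nonneg_left (cutMetric_uncross A B C u v) (hc u v)
  simp only [mul_add, sum_add_distrib, ← two_mul_crossCap hsym] at h
  linarith

theorem cutVal_le_crossCap (c : V → V → ℝ) {T S A : Finset V} (h : T ∩ A = S) :
    cutVal c T S ≤ crossCap c A := by
  refine inf'_le _ (mem_filter.mpr ⟨mem_univ A, h ▸ inter_subset_right, ?_⟩)
  rw [← h, sdiff_inter_self_left]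
  exact disjoint_sdiff_self_left

theorem exists_cutVal_eq_crossCap (c : V → V → ℝ) {T S : Finset V} (hS : S ⊆ T) :
    ∃ A, T ∩ A = S ∧ cutVal c T S = crossCap c A := by
  obtain ⟨A, hA, hval⟩ := exists_mem_eq_inf'
    (s := univ.filter fun A : Finset V => S ⊆ A ∧ Disjoint (T \ S) A)
    ⟨S, by simp [sdiff_disjoint]⟩ (crossCap c)
  obtain ⟨-, hSA, hdisj⟩ := mem_filter.mp hA
  refine ⟨A, ?_, hval⟩
  ext t
  refine ⟨fun ht => ?_, fun ht => mem_inter.mpr ⟨hS ht, hSA ht⟩⟩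
  by_contra htS
  exact disjoint_left.mp hdisj (mem_sdiff.mpr ⟨(mem_inter.mp ht).1, htS⟩) (mem_inter.mp ht).2

end

/-- For four terminals `T = {t₁,t₂,t₃,t₄}` in any edge-capacitated graph,
`cut({1,2}) + cut({1,3}) + cut({1,4}) ≥ cut({1}) + cut({2}) + cut({3}) + cut({4})`. -/
theorem four_terminal_inequality {V : Type*} [Fintype V] (c : V → V → ℝ)
    (hc : ∀ u v, 0 ≤ c u v) (hsym : ∀ u v, c u v = c v u)
    (t1 t2 t3 t4 : V)
    (h12 : t1 ≠ t2) (h13 : t1 ≠ t3) (h14 : t1 ≠ t4)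
    (h23 : t2 ≠ t3) (h24 : t2 ≠ t4) (h34 : t3 ≠ t4) :
    cutVal c {t1, t2, t3, t4} {t1} + cutVal c {t1, t2, t3, t4} {t2} +
        cutVal c {t1, t2, t3, t4} {t3} + cutVal c {t1, t2, t3, t4} {t4} ≤
      cutVal c {t1, t2, t3, t4} {t1, t2} + cutVal c {t1, t2, t3, t4} {t1, t3} +
        cutVal c {t1, t2, t3, t4} {t1, t4} := by
  set T : Finset V := {t1, t2, t3, t4}
  obtain ⟨A, hA, hcutA⟩ := exists_cutVal_eq_crossCap c (T := T) (S := {t1, t2}) (by simp [T])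
  obtain ⟨B, hB, hcutB⟩ := exists_cutVal_eq_crossCap c (T := T) (S := {t1, t3}) (by simp [T])
  obtain ⟨C, hC, hcutC⟩ := exists_cutVal_eq_crossCap c (T := T) (S := {t1, t4}) (by simp [T])
  have h1 : T ∩ (A ∩ B ∩ C) = {t1} := by
    rw [inter_inter_distrib_left T (A ∩ B), inter_inter_distrib_left T A, hA, hB, hC]
    ext; simp; grind
  have h2 : T ∩ (A \ (B ∪ C)) = {t2} := by
    rw [Finset.inter_sdiff_distrib_left, inter_union_distrib_left, hA, hB, hC]
    ext; simp; grind
  have h3 : T ∩ (B \ (A ∪ C)) = {t3} := by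
    rw [Finset.inter_sdiff_distrib_left, inter_union_distrib_left, hA, hB, hC]
    ext; simp; grind
  have h4 : T ∩ (C \ (A ∪ B)) = {t4} := by
    rw [Finset.inter_sdiff_distrib_left, inter_union_distrib_left, hA, hB, hC]
    ext; simp; grind
  linarith [cutVal_le_crossCap c h1, cutVal_le_crossCap c h2, cutVal_le_crossCap c h3,
    cutVal_le_crossCap c h4, crossCap_uncross hc hsym A B C]
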